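/- Let k ≥ 4, m ≥ 0 and n ≥ k−1 be integers. Then #{Δ ∈ P_k(m,n) : d_1 = d_{k−1} ≥ 2 and α = ∅} = #{Δ ∈ P_k(m,n+1) : γ^1 = ⋯ = γ^{k−2} = ∅, d_1 = d_2 = ⋯ = d_{k−2} = d_{k−1} + 1 ≥ 2, and α = β = (1^{d_1}), the partition consisting of d_1 parts equal to 1}. -/

import Mathlib

/-- A partition: a finite nonincreasing list of positive integers. -/
structure Partn where
  parts : List ℕ
  sorted : parts.Pairwise (· ≥ ·)
  pos : ∀ x ∈ parts, 0 < x

namespace Partn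

/-- The weight `|λ|` of a partition: the sum of its parts. -/
def wt (p : Partn) : ℕ := p.parts.sum

/-- The length `ℓ(λ)`: the number of parts. -/
def len (p : Partn) : ℕ := p.parts.length

/-- The `j`-th largest part `λ_j` (1-indexed), with `λ_j = 0` for `j > ℓ(λ)`. -/
def part (p : Partn) (j : ℕ) : ℕ := p.parts.getD (j - 1) 0

/-- `f_j(λ)`: the number of parts of `λ` equal to `j`. -/
def freq (p : Partn) (j : ℕ) : ℕ := p.parts.count j

/-- The empty partition. -/
def empty : Partn := ⟨[], List.Pairwise.nil, by simp⟩

end Partn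

/-- The type of `(2k-1)`-tuples `(α, β, γ^1, …, γ^{k-2}, ϖ^1, …, ϖ^{k-1})`. -/
abbrev PTuple (k : ℕ) : Type :=
  Partn × Partn × (Fin (k - 2) → Partn) × (Fin (k - 1) → Partn)

/-- `d_j := ℓ(ϖ^j)` (1-indexed, `0` out of range). -/
def dIdx (k : ℕ) (w : Fin (k - 1) → Partn) (j : ℕ) : ℕ :=
  if h : j - 1 < k - 1 then (w ⟨j - 1, h⟩).len else 0

/-- `γ^j` (1-indexed, the empty partition out of range). -/
def gIdx (k : ℕ) (g : Fin (k - 2) → Partn) (j : ℕ) : Partn :=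
  if h : j - 1 < k - 2 then g ⟨j - 1, h⟩ else Partn.empty

/-- Membership in Garvan-type set `P_k(m, n)` of `(2k-1)`-tuples of partitions. -/
def PkMem (k : ℕ) (m : ℤ) (n : ℕ) (t : PTuple k) : Prop :=
  (∀ i : Fin (k - 1), (t.2.2.2 i).parts =
      List.replicate (t.2.2.2 i).len (t.2.2.2 i).len) ∧
  (∀ j, 1 ≤ j → j + 1 ≤ k - 1 → dIdx k t.2.2.2 (j + 1) ≤ dIdx k t.2.2.2 j) ∧
  1 ≤ dIdx k t.2.2.2 (k - 1) ∧
  (∀ x ∈ t.1.parts, x ≤ dIdx k t.2.2.2 (k - 1)) ∧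
  (∀ x ∈ t.2.1.parts, x ≤ dIdx k t.2.2.2 (k - 1)) ∧
  (t.1.len : ℤ) - (t.2.1.len : ℤ) = m ∧
  (∀ j, 1 ≤ j → j ≤ k - 2 →
      (gIdx k t.2.2.1 j).len ≤ dIdx k t.2.2.2 j - dIdx k t.2.2.2 (j + 1)) ∧
  t.1.wt + t.2.1.wt + (∑ i, (t.2.2.1 i).wt) + (∑ i, (t.2.2.2 i).wt) = n

/-!
Both sides are rigid. On the left, `d_1 = d_{k-1}` makes every `ϖ^i` the square `(d^d)` with
`d = d_1`, so `ℓ(γ^i) ≤ d_i - d_{i+1} = 0`, and `α = ∅` together with `m ≥ 0` forces `β = ∅`.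
On the right the tuple is read off from `d = d_1` as well. Hence each side consists of at most
one tuple, determined by `d`, and it is present exactly when `d ≥ 2`, `m = 0` and
`n = (k - 1) d²`; the weight on the right is `2d + (k - 2) d² + (d - 1)² = (k - 1) d² + 1`.
-/

namespace Partn

theorem ext_parts {p q : Partn} (h : p.parts = q.parts) : p = q := by
  cases p; cases q; simp_all

theorem eq_empty_of_len_eq_zero {p : Partn} (h : p.len = 0) : p = empty :=
  ext_parts (List.length_eq_zero_iff.mp h)

def square (d : ℕ) : Partn :=
  ⟨List.replicate d d, List.pairwise_replicate.mpr (Or.inr le_rfl), fun x hx => by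
    obtain ⟨hd, rfl⟩ := List.mem_replicate.mp hx
    omega⟩

def ones (d : ℕ) : Partn :=
  ⟨List.replicate d 1, List.pairwise_replicate.mpr (Or.inr le_rfl), fun x hx => by
    rw [List.eq_of_mem_replicate hx]
    exact one_pos⟩

@[simp] theorem empty_parts : empty.parts = [] := rfl
@[simp] theorem empty_len : empty.len = 0 := rfl
@[simp] theorem empty_wt : empty.wt = 0 := rfl
@[simp] theorem square_parts (d : ℕ) : (square d).parts = List.replicate d d := rfl
@[simp] theorem square_len (d : ℕ) : (square d).len = d := List.length_replicate
@[simp] theorem square_wt (d : ℕ) : (square d).wt = d * d := by simp [wt, square]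
@[simp] theorem ones_len (d : ℕ) : (ones d).len = d := List.length_replicate
@[simp] theorem ones_wt (d : ℕ) : (ones d).wt = d := by simp [wt, ones]

theorem eq_square_len {p : Partn} (h : p.parts = List.replicate p.len p.len) :
    p = square p.len :=
  ext_parts h

end Partn

section Indexing

variable {k : ℕ}

theorem dIdx_of_le (w : Fin (k - 1) → Partn) {j : ℕ} (h1 : 1 ≤ j) (h2 : j ≤ k - 1) :
    dIdx k w j = (w ⟨j - 1, by omega⟩).len :=
  dif_pos _

theorem dIdx_succ (w : Fin (k - 1) → Partn) (i : Fin (k - 1)) :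
    dIdx k w (i + 1) = (w i).len := by
  simp [dIdx]

theorem gIdx_succ (g : Fin (k - 2) → Partn) (i : Fin (k - 2)) : gIdx k g (i + 1) = g i := by
  simp [gIdx]

theorem gIdx_const_empty (j : ℕ) : gIdx k (fun _ => Partn.empty) j = Partn.empty := by
  unfold gIdx
  split <;> rfl

theorem dIdx_antitone (w : Fin (k - 1) → Partn)
    (hw : ∀ j, 1 ≤ j → j + 1 ≤ k - 1 → dIdx k w (j + 1) ≤ dIdx k w j)
    {a b : ℕ} (ha : 1 ≤ a) (hab : a ≤ b) (hb : b ≤ k - 1) : dIdx k w b ≤ dIdx k w a := by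
  induction b, hab using Nat.le_induction with
  | base => exact le_rfl
  | succ c hac ih => exact (hw c (by omega) hb).trans (ih (by omega))

end Indexing

def PkFlat (k : ℕ) (m : ℤ) (n : ℕ) (t : PTuple k) : Prop :=
  PkMem k m n t ∧ dIdx k t.2.2.2 1 = dIdx k t.2.2.2 (k - 1) ∧ 2 ≤ dIdx k t.2.2.2 1 ∧
    t.1.parts = []

def PkStep (k : ℕ) (m : ℤ) (n : ℕ) (t : PTuple k) : Prop :=
  PkMem k m n t ∧
    (∀ j, 1 ≤ j → j ≤ k - 2 → (gIdx k t.2.2.1 j).parts = []) ∧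
    (∀ j, 1 ≤ j → j ≤ k - 2 → dIdx k t.2.2.2 j = dIdx k t.2.2.2 (k - 1) + 1) ∧
    2 ≤ dIdx k t.2.2.2 1 ∧
    t.1.parts = List.replicate (dIdx k t.2.2.2 1) 1 ∧
    t.2.1.parts = List.replicate (dIdx k t.2.2.2 1) 1

def flatTuple (k d : ℕ) : PTuple k :=
  (Partn.empty, Partn.empty, fun _ => Partn.empty, fun _ => Partn.square d)

def stepTuple (k d : ℕ) : PTuple k :=
  (Partn.ones d, Partn.ones d, fun _ => Partn.empty,
    fun i => Partn.square (if (i : ℕ) < k - 2 then d else d - 1))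

section Tuples

variable {k d : ℕ}

theorem dIdx_flatTuple {j : ℕ} (h1 : 1 ≤ j) (h2 : j ≤ k - 1) :
    dIdx k (flatTuple k d).2.2.2 j = d := by
  rw [dIdx_of_le _ h1 h2]
  simp [flatTuple]

theorem dIdx_stepTuple {j : ℕ} (h1 : 1 ≤ j) (h2 : j ≤ k - 1) :
    dIdx k (stepTuple k d).2.2.2 j = if j < k - 1 then d else d - 1 := by
  rw [dIdx_of_le _ h1 h2]
  simp only [stepTuple, Partn.square_len]
  split_ifs <;> omega

theorem sum_wt_stepTuple (hk : 2 ≤ k) :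
    ∑ i, ((stepTuple k d).2.2.2 i).wt = (k - 2) * (d * d) + (d - 1) * (d - 1) := by
  simp only [stepTuple, Partn.square_wt]
  rw [Fin.sum_univ_eq_sum_range (fun i => (if i < k - 2 then d else d - 1) *
    (if i < k - 2 then d else d - 1)), show k - 1 = k - 2 + 1 by omega, Finset.sum_range_succ,
    Finset.sum_congr rfl fun i hi => by rw [if_pos (Finset.mem_range.mp hi)]]
  simp

theorem pkFlat_flatTuple_iff {m : ℤ} {n : ℕ} (hk : 2 ≤ k) :
    PkFlat k m n (flatTuple k d) ↔ 2 ≤ d ∧ m = 0 ∧ n = (k - 1) * (d * d) := by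
  have hd : ∀ j, 1 ≤ j → j ≤ k - 1 → dIdx k (flatTuple k d).2.2.2 j = d := fun _ =>
    dIdx_flatTuple
  have hwt : (flatTuple k d).1.wt + (flatTuple k d).2.1.wt + ∑ i, ((flatTuple k d).2.2.1 i).wt +
      ∑ i, ((flatTuple k d).2.2.2 i).wt = (k - 1) * (d * d) := by
    simp [flatTuple]
  constructor
  · rintro ⟨⟨-, -, -, -, -, hm, -, hn⟩, -, h2, -⟩
    rw [hd 1 le_rfl (by omega)] at h2
    exact ⟨h2, by simpa [flatTuple] using hm.symm, by rw [← hn, hwt]⟩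
  · rintro ⟨h2, rfl, rfl⟩
    refine ⟨⟨fun i => by simp [flatTuple], fun j hj1 hj2 => ?_, ?_, nofun, nofun,
      by simp [flatTuple], fun j _ _ => ?_, hwt⟩, ?_, ?_, rfl⟩
    · rw [hd j hj1 (by omega), hd (j + 1) (by omega) hj2]
    · rw [hd (k - 1) (by omega) le_rfl]
      omega
    · simp [flatTuple, gIdx_const_empty]
    · rw [hd 1 le_rfl (by omega), hd (k - 1) (by omega) le_rfl]
    · rwa [hd 1 le_rfl (by omega)]

theorem pkStep_stepTuple_iff {m : ℤ} {n : ℕ} (hk : 3 ≤ k) :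
    PkStep k m n (stepTuple k d) ↔ 2 ≤ d ∧ m = 0 ∧ n = (k - 1) * (d * d) + 1 := by
  have hd : ∀ j, 1 ≤ j → j ≤ k - 1 →
      dIdx k (stepTuple k d).2.2.2 j = if j < k - 1 then d else d - 1 := fun _ =>
    dIdx_stepTuple
  have hd1 : dIdx k (stepTuple k d).2.2.2 1 = d := by
    rw [hd 1 le_rfl (by omega), if_pos (by omega)]
  have hdl : dIdx k (stepTuple k d).2.2.2 (k - 1) = d - 1 := by
    rw [hd _ (by omega) le_rfl, if_neg (by omega)]
  have hwt : 1 ≤ d → (stepTuple k d).1.wt + (stepTuple k d).2.1.wt +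
      ∑ i, ((stepTuple k d).2.2.1 i).wt + ∑ i, ((stepTuple k d).2.2.2 i).wt =
      (k - 1) * (d * d) + 1 := by
    intro h1
    rw [sum_wt_stepTuple (by omega)]
    obtain ⟨e, rfl⟩ : ∃ e, d = e + 1 := ⟨d - 1, by omega⟩
    obtain ⟨l, rfl⟩ : ∃ l, k = l + 2 := ⟨k - 2, by omega⟩
    simp only [stepTuple, Partn.ones_wt, Partn.empty_wt, Finset.sum_const_zero,
      Nat.add_sub_cancel, show l + 2 - 1 = l + 1 by omega]
    ring
  constructor
  · rintro ⟨⟨-, -, -, -, -, hm, -, hn⟩, -, -, h2, -, -⟩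
    rw [hd1] at h2
    exact ⟨h2, by simpa [stepTuple] using hm.symm, by rw [← hn, hwt (by omega)]⟩
  · rintro ⟨h2, rfl, rfl⟩
    refine ⟨⟨fun i => by simp [stepTuple], fun j hj1 hj2 => ?_, ?_,
      fun x hx => ?_, fun x hx => ?_, by simp [stepTuple], fun j _ _ => ?_, hwt (by omega)⟩,
      fun j _ _ => ?_, fun j hj1 hj2 => ?_, ?_, ?_, ?_⟩
    · rw [hd j hj1 (by omega), hd (j + 1) (by omega) hj2]
      split_ifs <;> omega
    · rw [hdl]
      omega
    · rw [hdl, List.eq_of_mem_replicate hx]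
      omega
    · rw [hdl, List.eq_of_mem_replicate hx]
      omega
    · simp [stepTuple, gIdx_const_empty]
    · simp [stepTuple, gIdx_const_empty]
    · rw [hd j hj1 (by omega), hdl, if_pos (by omega)]
      omega
    · rwa [hd1]
    · rw [hd1]
      rfl
    · rw [hd1]
      rfl

theorem flatTuple_injective (hk : 2 ≤ k) : Function.Injective (flatTuple k) :=
  Function.LeftInverse.injective (g := fun t => dIdx k t.2.2.2 1) fun _ =>
    dIdx_flatTuple le_rfl (by omega)

theorem stepTuple_injective : Function.Injective (stepTuple k) :=
  Function.LeftInverse.injective (g := fun t => t.1.len) fun d => Partn.ones_len d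

end Tuples

section Rigidity

variable {k : ℕ} {m : ℤ} {n : ℕ} {t : PTuple k}

theorem PkFlat.eq_flatTuple (hm : 0 ≤ m) (h : PkFlat k m n t) :
    t = flatTuple k (dIdx k t.2.2.2 1) := by
  obtain ⟨a, b, g, w⟩ := t
  obtain ⟨⟨hsq, hanti, -, -, -, hlen, hg, -⟩, h1, -, ha⟩ := h
  dsimp only at *
  have hd : ∀ j, 1 ≤ j → j ≤ k - 1 → dIdx k w j = dIdx k w 1 := fun j hj1 hj2 =>
    le_antisymm (dIdx_antitone w hanti le_rfl hj1 hj2) (h1 ▸ dIdx_antitone w hanti hj1 hj2 le_rfl)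
  obtain rfl : a = Partn.empty := Partn.ext_parts ha
  have hb : b = Partn.empty := Partn.eq_empty_of_len_eq_zero (by simp at hlen; omega)
  simp only [flatTuple, Prod.mk.injEq, true_and]
  refine ⟨hb, funext fun i => ?_, funext fun i => ?_⟩
  · have hi := hg (i + 1) (by omega) (by omega)
    rw [gIdx_succ, hd (i + 1) (by omega) (by omega), hd (i + 1 + 1) (by omega) (by omega)] at hi
    exact Partn.eq_empty_of_len_eq_zero (by omega)
  · rw [Partn.eq_square_len (hsq i), ← dIdx_succ, hd _ (by omega) (by omega)]

theorem PkStep.eq_stepTuple (hk : 3 ≤ k) (h : PkStep k m n t) :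
    t = stepTuple k (dIdx k t.2.2.2 1) := by
  obtain ⟨a, b, g, w⟩ := t
  obtain ⟨⟨hsq, -, -, -, -, -, -, -⟩, hg, hd, -, ha, hb⟩ := h
  dsimp only at *
  simp only [stepTuple, Prod.mk.injEq]
  refine ⟨Partn.ext_parts ha, Partn.ext_parts hb, funext fun i => ?_, funext fun i => ?_⟩
  · have hi := hg (i + 1) (by omega) (by omega)
    rw [gIdx_succ] at hi
    exact Partn.ext_parts hi
  · rw [Partn.eq_square_len (hsq i), ← dIdx_succ]
    have h1 := hd 1 le_rfl (by omega)
    split_ifs with hi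
    · rw [hd _ (by omega) (by omega), h1]
    · rw [show (i : ℕ) + 1 = k - 1 by omega, h1]
      rfl

end Rigidity

theorem lem_pp3_general (k : ℕ) (m : ℤ) (n : ℕ) (hk : 4 ≤ k) (hm : 0 ≤ m) :
    {t : PTuple k | PkMem k m n t ∧
        dIdx k t.2.2.2 1 = dIdx k t.2.2.2 (k - 1) ∧ 2 ≤ dIdx k t.2.2.2 1 ∧
        t.1.parts = []}.ncard =
      {t : PTuple k | PkMem k m (n + 1) t ∧
        (∀ j, 1 ≤ j → j ≤ k - 2 → (gIdx k t.2.2.1 j).parts = []) ∧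
        (∀ j, 1 ≤ j → j ≤ k - 2 →
          dIdx k t.2.2.2 j = dIdx k t.2.2.2 (k - 1) + 1) ∧
        2 ≤ dIdx k t.2.2.2 1 ∧
        t.1.parts = List.replicate (dIdx k t.2.2.2 1) 1 ∧
        t.2.1.parts = List.replicate (dIdx k t.2.2.2 1) 1}.ncard := by
  change {t | PkFlat k m n t}.ncard = {t | PkStep k m (n + 1) t}.ncard
  rw [← Set.ncard_preimage_of_injective_subset_range (s := {t | PkFlat k m n t})
      (flatTuple_injective (by omega)) fun t ht => ⟨_, (PkFlat.eq_flatTuple hm ht).symm⟩,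
    ← Set.ncard_preimage_of_injective_subset_range (s := {t | PkStep k m (n + 1) t})
      stepTuple_injective fun t ht => ⟨_, (PkStep.eq_stepTuple (by omega) ht).symm⟩]
  congr 1
  ext d
  simp only [Set.mem_preimage, Set.mem_ofPred_eq, pkFlat_flatTuple_iff (show 2 ≤ k by omega),
    pkStep_stepTuple_iff (show 3 ≤ k by omega), add_left_inj]

/-- Lemma 5.6 (restated), case `k ≥ 4`. -/
theorem lem_pp3 (k : ℕ) (m : ℤ) (n : ℕ) (hk : 4 ≤ k) (hm : 0 ≤ m)
    (hn : k - 1 ≤ n) :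
    {t : PTuple k | PkMem k m n t ∧
        dIdx k t.2.2.2 1 = dIdx k t.2.2.2 (k - 1) ∧ 2 ≤ dIdx k t.2.2.2 1 ∧
        t.1.parts = []}.ncard =
      {t : PTuple k | PkMem k m (n + 1) t ∧
        (∀ j, 1 ≤ j → j ≤ k - 2 → (gIdx k t.2.2.1 j).parts = []) ∧
        (∀ j, 1 ≤ j → j ≤ k - 2 →
          dIdx k t.2.2.2 j = dIdx k t.2.2.2 (k - 1) + 1) ∧
        2 ≤ dIdx k t.2.2.2 1 ∧
        t.1.parts = List.replicate (dIdx k t.2.2.2 1) 1 ∧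
        t.2.1.parts = List.replicate (dIdx k t.2.2.2 1) 1}.ncard :=
  lem_pp3_general k m n hk hm
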